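/- arXiv:1405.3147 — 4 statements merged into one kernel-verified Lean document; each statement's English description precedes it below -/
import Mathlib

section
/- Let E be a normed vector space over ℂ (or ℝ), let r ≥ 1 be an integer, let c₁, …, c_r be pairwise distinct positive reals, and let a₁, …, a_r be reals satisfying a₁ + … + a_r = 1 and Σᵢ aᵢcᵢ^{2k} = 0 for k = 1, …, r−1. Let ψ, g₁, …, g_{r−1} ∈ E, let C ≥ 0, τ > 0, and let Ψ₁, …, Ψ_r ∈ E satisfy ‖ψ − Ψᵢ − Σ_{k=1}^{r−1} g_k·(cᵢτ)^{2k}‖ ≤ C·(cᵢτ)^{2r} for each i = 1, …, r. Then ‖ψ − Σᵢ aᵢΨᵢ‖ ≤ (Σᵢ |aᵢ|·cᵢ^{2r})·C·τ^{2r}. -/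
open Finset

/-!
Write `ψ - Ψ i = ∑ₖ (c i τ)^(2k) • g k + Rᵢ` with `‖Rᵢ‖ ≤ C (c i τ)^(2r)`. Since `∑ a i = 1`,
`ψ - ∑ a i • Ψ i = ∑ a i • (ψ - Ψ i)`; the moment conditions make every term
`(∑ a i (c i)^(2k)) τ^(2k) • g k` of the expansion vanish, leaving `∑ a i • Rᵢ`, whose norm is
at most `∑ |a i| C (c i τ)^(2r)`.
-/

section Extrapolation

variable {ι E : Type*} [Fintype ι] [NormedAddCommGroup E] [NormedSpace ℝ E]

theorem sub_sum_smul_eq_sum_smul_sub {a : ι → ℝ} (ha : ∑ i, a i = 1) (ψ : E) (Ψ : ι → E) :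
    ψ - ∑ i, a i • Ψ i = ∑ i, a i • (ψ - Ψ i) := by
  simp only [smul_sub, sum_sub_distrib, ← sum_smul, ha, one_smul]

theorem sum_smul_expansion_eq_zero {κ : Type*} (s : Finset κ) (e : κ → ℕ) (a c : ι → ℝ)
    (hmom : ∀ k ∈ s, ∑ i, a i * c i ^ e k = 0) (τ : ℝ) (g : κ → E) :
    ∑ i, a i • ∑ k ∈ s, (c i * τ) ^ e k • g k = 0 := by
  have hterm : ∀ k ∈ s, ∑ i, a i • (c i * τ) ^ e k • g k
      = ((∑ i, a i * c i ^ e k) * τ ^ e k) • g k := fun k _ => by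
    simp only [sum_mul, sum_smul, smul_smul, mul_pow, mul_assoc]
  simp only [smul_sum]
  rw [sum_comm]
  exact sum_eq_zero fun k hk => by rw [hterm k hk, hmom k hk, zero_mul, zero_smul]

theorem norm_sum_smul_le_of_norm_le_pow (a c : ι → ℝ) (R : ι → E) (C τ : ℝ) (m : ℕ)
    (hR : ∀ i, ‖R i‖ ≤ C * (c i * τ) ^ m) :
    ‖∑ i, a i • R i‖ ≤ (∑ i, |a i| * c i ^ m) * C * τ ^ m :=
  calc ‖∑ i, a i • R i‖ ≤ ∑ i, ‖a i • R i‖ := norm_sum_le _ _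
    _ ≤ ∑ i, |a i| * (C * (c i * τ) ^ m) := sum_le_sum fun i _ => by
        rw [norm_smul, Real.norm_eq_abs]
        exact mul_le_mul_of_nonneg_left (hR i) (abs_nonneg _)
    _ = (∑ i, |a i| * c i ^ m) * C * τ ^ m := by
        simp only [sum_mul, mul_pow]
        exact sum_congr rfl fun i _ => by ring

end Extrapolation

theorem richardson_extrapolation_error_bound_general
    {E : Type*} [NormedAddCommGroup E] [NormedSpace ℝ E]
    (r : ℕ) (c : Fin r → ℝ)
    (a : Fin r → ℝ) (ha1 : ∑ i, a i = 1)
    (hamom : ∀ k : ℕ, 1 ≤ k → k ≤ r - 1 → ∑ i, a i * (c i) ^ (2 * k) = 0)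
    (ψ : E) (g : ℕ → E) (C : ℝ) (τ : ℝ)
    (Ψ : Fin r → E)
    (hΨ : ∀ i, ‖ψ - Ψ i - ∑ k ∈ Icc 1 (r - 1), ((c i * τ) ^ (2 * k)) • g k‖
            ≤ C * (c i * τ) ^ (2 * r)) :
    ‖ψ - ∑ i, a i • Ψ i‖ ≤ (∑ i, |a i| * (c i) ^ (2 * r)) * C * τ ^ (2 * r) := by
  set expansion : Fin r → E := fun i => ∑ k ∈ Icc 1 (r - 1), (c i * τ) ^ (2 * k) • g k
  have hcancel : ∑ i, a i • expansion i = 0 :=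
    sum_smul_expansion_eq_zero _ (2 * ·) a c
      (fun k hk => hamom k (mem_Icc.1 hk).1 (mem_Icc.1 hk).2) τ g
  have hremainder : ψ - ∑ i, a i • Ψ i = ∑ i, a i • (ψ - Ψ i - expansion i) := by
    rw [sub_sum_smul_eq_sum_smul_sub ha1]
    simp only [smul_sub, sum_sub_distrib, hcancel, sub_zero]
  rw [hremainder]
  exact norm_sum_smul_le_of_norm_le_pow a c _ C τ (2 * r) hΨ

/-- Error bound for the Richardson extrapolation in time: if each approximation
`Ψ i` (computed with time step `c i * τ`) admits the error expansion
`ψ - Ψ i = ∑_{k=1}^{r-1} (c i * τ)^(2k) • g k + O((c i * τ)^(2r))`, and the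
coefficients `a` satisfy the moment conditions, then the linear combination
`∑ a i • Ψ i` approximates `ψ` with accuracy `O(τ^(2r))`. -/
theorem richardson_extrapolation_error_bound
    {E : Type*} [NormedAddCommGroup E] [NormedSpace ℝ E]
    (r : ℕ) (hr : 1 ≤ r) (c : Fin r → ℝ)
    (hcpos : ∀ i, 0 < c i) (hcdist : Function.Injective c)
    (a : Fin r → ℝ) (ha1 : ∑ i, a i = 1)
    (hamom : ∀ k : ℕ, 1 ≤ k → k ≤ r - 1 → ∑ i, a i * (c i) ^ (2 * k) = 0)
    (ψ : E) (g : ℕ → E) (C : ℝ) (hC : 0 ≤ C) (τ : ℝ) (hτ : 0 < τ)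
    (Ψ : Fin r → E)
    (hΨ : ∀ i, ‖ψ - Ψ i - ∑ k ∈ Icc 1 (r - 1), ((c i * τ) ^ (2 * k)) • g k‖
            ≤ C * (c i * τ) ^ (2 * r)) :
    ‖ψ - ∑ i, a i • Ψ i‖ ≤ (∑ i, |a i| * (c i) ^ (2 * r)) * C * τ ^ (2 * r) :=
  richardson_extrapolation_error_bound_general r c a ha1 hamom ψ g C τ Ψ hΨ
end

section
/- Let V be a complex inner product space, let L : V × V → ℂ be a sesquilinear form that is Hermitian-symmetric (L(w,φ) = conj(L(φ,w)) for all w, φ ∈ V; in particular L(w,w) ∈ ℝ), let ħ > 0, τ > 0 and M ≥ 1 an integer. Suppose Ψ⁰, Ψ¹, …, Ψ^M ∈ V and F¹, …, F^M ∈ V satisfy, for every m with 1 ≤ m ≤ M and every φ ∈ V, the Crank–Nicolson identity iħ·⟨(Ψ^m − Ψ^{m−1})/τ, φ⟩ = L((Ψ^{m−1} + Ψ^m)/2, φ) + ⟨F^m, φ⟩. Then max_{0 ≤ m ≤ M} ‖Ψ^m‖ ≤ ‖Ψ⁰‖ + (2/ħ)·Σ_{m=1}^M ‖F^m‖·τ.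 -/
/-!
Test the scheme at step `m` with `φ = Ψ^{m-1} + Ψ^m`. By Hermitian symmetry the `L`-term is
real, so taking imaginary parts leaves the energy identity
`(ħ/τ) (‖Ψ^m‖² - ‖Ψ^{m-1}‖²) = Im ⟪Ψ^{m-1} + Ψ^m, F^m⟫ ≤ (‖Ψ^{m-1}‖ + ‖Ψ^m‖) ‖F^m‖`.
Cancelling the factor `‖Ψ^{m-1}‖ + ‖Ψ^m‖` gives `‖Ψ^m‖ ≤ ‖Ψ^{m-1}‖ + (τ/ħ) ‖F^m‖`, which
telescopes.
-/

open Finset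
open scoped InnerProductSpace ComplexConjugate

theorem im_apply_self_eq_zero_of_herm {V : Type*} {L : V → V → ℂ}
    (hL_herm : ∀ w φ : V, L w φ = conj (L φ w)) (u : V) : (L u u).im = 0 :=
  Complex.conj_eq_iff_im.mp (hL_herm u u).symm

theorem apply_real_smul_left {V : Type*} [AddCommGroup V] [Module ℂ V] {L : V → V → ℂ}
    (hL_lin : ∀ (a : ℂ) (w w' φ : V), L (a • w + w') φ = a * L w φ + L w' φ)
    (r : ℝ) (w φ : V) : L (r • w) φ = r * L w φ := by
  have hL_zero : L 0 φ = 0 := by simpa using hL_lin 1 0 0 φ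
  simpa [hL_zero] using hL_lin r w 0 φ

theorem re_inner_add_sub {V : Type*} [NormedAddCommGroup V] [InnerProductSpace ℂ V] (p q : V) :
    (⟪p + q, q - p⟫_ℂ).re = ‖q‖ ^ 2 - ‖p‖ ^ 2 := by
  let := InnerProductSpace.rclikeToReal ℂ V
  rw [← RCLike.re_to_complex, ← real_inner_eq_re_inner]
  simp only [inner_add_left, inner_sub_right, real_inner_self_eq_norm_sq, real_inner_comm p q]
  ring

theorem le_add_div_of_mul_sq_sub_sq_le {a b c d : ℝ} (ha : 0 ≤ a) (hb : 0 ≤ b) (hc : 0 < c)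
    (hd : 0 ≤ d) (h : c * (b ^ 2 - a ^ 2) ≤ (a + b) * d) : b ≤ a + d / c := by
  rw [← sub_le_iff_le_add', le_div_iff₀ hc]
  rcases (add_nonneg ha hb).eq_or_lt with hab | hab
  · nlinarith
  · nlinarith

theorem norm_le_of_crank_nicolson_step {V : Type*} [NormedAddCommGroup V] [InnerProductSpace ℂ V]
    {hbar τ : ℝ} (hhbar : 0 < hbar) (hτ : 0 < τ) {p q f : V} {ℓ : ℂ} (hℓ : ℓ.im = 0)
    (h : Complex.I * (hbar : ℂ) * ⟪p + q, (τ⁻¹ : ℝ) • (q - p)⟫_ℂ = ℓ + ⟪p + q, f⟫_ℂ) :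
    ‖q‖ ≤ ‖p‖ + τ / hbar * ‖f‖ := by
  have henergy : hbar / τ * (‖q‖ ^ 2 - ‖p‖ ^ 2) = (⟪p + q, f⟫_ℂ).im := by
    have him := congrArg Complex.im h
    rw [← Complex.coe_smul, inner_smul_right] at him
    simp only [Complex.mul_im, Complex.mul_re, Complex.add_im, hℓ, Complex.I_re, Complex.I_im,
      Complex.ofReal_re, Complex.ofReal_im, re_inner_add_sub] at him
    linear_combination him
  have hforce : (⟪p + q, f⟫_ℂ).im ≤ (‖p‖ + ‖q‖) * ‖f‖ :=
    calc (⟪p + q, f⟫_ℂ).im ≤ ‖⟪p + q, f⟫_ℂ‖ := Complex.im_le_norm _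
      _ ≤ ‖p + q‖ * ‖f‖ := norm_inner_le_norm _ _
      _ ≤ (‖p‖ + ‖q‖) * ‖f‖ := by gcongr; exact norm_add_le p q
  exact (le_add_div_of_mul_sq_sub_sq_le (norm_nonneg p) (norm_nonneg q) (div_pos hhbar hτ)
    (norm_nonneg f) (henergy.trans_le hforce)).trans_eq (by field_simp)

theorem le_add_sum_Icc_of_le_add {x g : ℕ → ℝ} {M : ℕ}
    (h : ∀ m, 1 ≤ m → m ≤ M → x m ≤ x (m - 1) + g m) :
    ∀ m ≤ M, x m ≤ x 0 + ∑ l ∈ Icc 1 m, g l := by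
  intro m hm
  induction m with
  | zero => simp
  | succ n ih =>
    rw [sum_Icc_succ_top (Nat.le_add_left 1 n), ← add_assoc]
    calc x (n + 1) ≤ x n + g (n + 1) := h (n + 1) (Nat.le_add_left 1 n) hm
      _ ≤ x 0 + ∑ l ∈ Icc 1 n, g l + g (n + 1) := by gcongr; exact ih (by omega)

theorem crank_nicolson_first_stability_bound_general
    {V : Type*} [NormedAddCommGroup V] [InnerProductSpace ℂ V]
    (L : V → V → ℂ)
    (hL_lin : ∀ (a : ℂ) (w w' φ : V), L (a • w + w') φ = a * L w φ + L w' φ)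
    (hL_herm : ∀ w φ : V, L w φ = conj (L φ w))
    (hbar τ : ℝ) (hhbar : 0 < hbar) (hτ : 0 < τ)
    (M : ℕ) (Ψ F : ℕ → V)
    (hscheme : ∀ m : ℕ, 1 ≤ m → m ≤ M → ∀ φ : V,
      Complex.I * (hbar : ℂ) * ⟪φ, (τ⁻¹ : ℝ) • (Ψ m - Ψ (m - 1))⟫_ℂ
        = L ((2⁻¹ : ℝ) • (Ψ (m - 1) + Ψ m)) φ + ⟪φ, F m⟫_ℂ) :
    ∀ m : ℕ, m ≤ M →
      ‖Ψ m‖ ≤ ‖Ψ 0‖ + (2 / hbar) * ∑ l ∈ Icc 1 M, ‖F l‖ * τ := by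
  have hstep (m : ℕ) (h1 : 1 ≤ m) (h2 : m ≤ M) :
      ‖Ψ m‖ ≤ ‖Ψ (m - 1)‖ + 2 / hbar * (‖F m‖ * τ) := by
    have hℓ : (L ((2⁻¹ : ℝ) • (Ψ (m - 1) + Ψ m)) (Ψ (m - 1) + Ψ m)).im = 0 := by
      rw [apply_real_smul_left hL_lin, Complex.im_ofReal_mul,
        im_apply_self_eq_zero_of_herm hL_herm, mul_zero]
    calc ‖Ψ m‖ ≤ ‖Ψ (m - 1)‖ + τ / hbar * ‖F m‖ :=
          norm_le_of_crank_nicolson_step hhbar hτ hℓ (hscheme m h1 h2 _)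
      _ = ‖Ψ (m - 1)‖ + 1 / hbar * (‖F m‖ * τ) := by ring
      _ ≤ ‖Ψ (m - 1)‖ + 2 / hbar * (‖F m‖ * τ) := by gcongr; norm_num
  intro m hm
  calc ‖Ψ m‖ ≤ ‖Ψ 0‖ + ∑ l ∈ Icc 1 m, 2 / hbar * (‖F l‖ * τ) :=
        le_add_sum_Icc_of_le_add hstep m hm
    _ ≤ ‖Ψ 0‖ + ∑ l ∈ Icc 1 M, 2 / hbar * (‖F l‖ * τ) := by gcongr
    _ = ‖Ψ 0‖ + 2 / hbar * ∑ l ∈ Icc 1 M, ‖F l‖ * τ := by rw [mul_sum]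

/-- First stability bound (Proposition 1) for the Crank–Nicolson scheme in
abstract Hilbert-space form: if `ihbar⟨(Ψ^m − Ψ^{m−1})/τ, φ⟩ = L((Ψ^{m−1}+Ψ^m)/2, φ)
+ ⟨F^m, φ⟩` for all test elements `φ`, with `L` a Hermitian-symmetric
sesquilinear form, then `max_m ‖Ψ^m‖ ≤ ‖Ψ⁰‖ + (2/hbar) ∑_{m=1}^M ‖F^m‖ τ`.
The pairing `⟨w, φ⟩` (linear in `w`, conjugate-linear in `φ`) is realized as
Mathlib's inner product `⟪φ, w⟫_ℂ`. -/
theorem crank_nicolson_first_stability_bound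
    {V : Type*} [NormedAddCommGroup V] [InnerProductSpace ℂ V]
    (L : V → V → ℂ)
    (hL_lin : ∀ (a : ℂ) (w w' φ : V), L (a • w + w') φ = a * L w φ + L w' φ)
    (hL_conjlin : ∀ (a : ℂ) (w φ φ' : V), L w (a • φ + φ') = conj a * L w φ + L w φ')
    (hL_herm : ∀ w φ : V, L w φ = conj (L φ w))
    (hbar τ : ℝ) (hhbar : 0 < hbar) (hτ : 0 < τ)
    (M : ℕ) (hM : 1 ≤ M) (Ψ F : ℕ → V)
    (hscheme : ∀ m : ℕ, 1 ≤ m → m ≤ M → ∀ φ : V,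
      Complex.I * (hbar : ℂ) * ⟪φ, (τ⁻¹ : ℝ) • (Ψ m - Ψ (m - 1))⟫_ℂ
        = L ((2⁻¹ : ℝ) • (Ψ (m - 1) + Ψ m)) φ + ⟪φ, F m⟫_ℂ) :
    ∀ m : ℕ, m ≤ M →
      ‖Ψ m‖ ≤ ‖Ψ 0‖ + (2 / hbar) * ∑ l ∈ Icc 1 M, ‖F l‖ * τ :=
  crank_nicolson_first_stability_bound_general L hL_lin hL_herm hbar τ hhbar hτ M Ψ F hscheme
end

section
/- Let V be a complex inner product space, let L : V × V → ℂ be a sesquilinear form that is Hermitian-symmetric (L(w,φ) = conj(L(φ,w)) for all w, φ ∈ V), let ħ > 0, τ > 0 and M ≥ 1 an integer. Suppose Ψ⁰, Ψ¹, …, Ψ^M ∈ V satisfy, for every m with 1 ≤ m ≤ M and every φ ∈ V, the Crank–Nicolson identity iħ·⟨(Ψ^m − Ψ^{m−1})/τ, φ⟩ = L((Ψ^{m−1} + Ψ^m)/2, φ). Then ‖Ψ^m‖ = ‖Ψ⁰‖ for every m with 0 ≤ m ≤ M. -/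
open scoped InnerProductSpace ComplexConjugate

/-
Test the scheme at step `m` against the midpoint `u = (Ψ^{m-1} + Ψ^m)/2` itself. Hermitian
symmetry makes `L(u, u)` real, so the left-hand side `iħτ⁻¹⟪u, Ψ^m - Ψ^{m-1}⟫` is real too, i.e.
`Re ⟪Ψ^m + Ψ^{m-1}, Ψ^m - Ψ^{m-1}⟫ = ‖Ψ^m‖² - ‖Ψ^{m-1}‖²` vanishes: every step preserves the norm.
-/

theorem re_inner_add_sub_eq_zero_iff {𝕜 E : Type*} [RCLike 𝕜] [NormedAddCommGroup E]
    [InnerProductSpace 𝕜 E] (x y : E) :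
    RCLike.re ⟪x + y, x - y⟫_𝕜 = 0 ↔ ‖x‖ = ‖y‖ := by
  rw [← sq_eq_sq₀ (norm_nonneg x) (norm_nonneg y), ← inner_self_eq_norm_sq (𝕜 := 𝕜),
    ← inner_self_eq_norm_sq (𝕜 := 𝕜), inner_add_left, inner_sub_right, inner_sub_right,
    map_add, map_sub, map_sub, inner_re_symm (𝕜 := 𝕜) y x]
  constructor <;> intro h <;> linarith

theorem Complex.im_self_eq_zero_of_eq_conj {X : Type*} {L : X → X → ℂ}
    (hL : ∀ w φ, L w φ = conj (L φ w)) (w : X) : (L w w).im = 0 :=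
  Complex.conj_eq_iff_im.mp (hL w w).symm

theorem norm_eq_of_crank_nicolson_step {V : Type*} [NormedAddCommGroup V] [InnerProductSpace ℂ V]
    {L : V → V → ℂ} (hL_herm : ∀ w φ : V, L w φ = conj (L φ w))
    {hbar τ : ℝ} (hhbar : hbar ≠ 0) (hτ : τ ≠ 0) {a b : V}
    (hstep : ∀ φ : V, Complex.I * (hbar : ℂ) * ⟪φ, (τ⁻¹ : ℝ) • (b - a)⟫_ℂ
      = L ((2⁻¹ : ℝ) • (a + b)) φ) :
    ‖b‖ = ‖a‖ := by
  set u := (2⁻¹ : ℝ) • (a + b)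
  have hlhs : Complex.I * (hbar : ℂ) * ⟪u, (τ⁻¹ : ℝ) • (b - a)⟫_ℂ
      = Complex.I * ((hbar * 2⁻¹ * τ⁻¹ : ℝ) * ⟪b + a, b - a⟫_ℂ) := by
    simp only [u, RCLike.real_smul_eq_coe_smul (K := ℂ), inner_smul_left, inner_smul_right,
      RCLike.ofReal_eq_complex_ofReal, Complex.conj_ofReal, add_comm a b]
    push_cast
    ring
  have hreal : (Complex.I * ((hbar * 2⁻¹ * τ⁻¹ : ℝ) * ⟪b + a, b - a⟫_ℂ)).im = 0 := by
    rw [← hlhs, hstep u]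
    exact Complex.im_self_eq_zero_of_eq_conj hL_herm u
  have hre : RCLike.re ⟪b + a, b - a⟫_ℂ = 0 := by
    rw [Complex.I_mul_im, Complex.re_ofReal_mul] at hreal
    simpa [hhbar, hτ] using hreal
  exact (re_inner_add_sub_eq_zero_iff b a).mp hre

theorem crank_nicolson_mass_conservation_general
    {V : Type*} [NormedAddCommGroup V] [InnerProductSpace ℂ V]
    (L : V → V → ℂ)
    (hL_herm : ∀ w φ : V, L w φ = conj (L φ w))
    (hbar τ : ℝ) (hhbar : 0 < hbar) (hτ : 0 < τ)
    (M : ℕ) (Ψ : ℕ → V)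
    (hscheme : ∀ m : ℕ, 1 ≤ m → m ≤ M → ∀ φ : V,
      Complex.I * (hbar : ℂ) * ⟪φ, (τ⁻¹ : ℝ) • (Ψ m - Ψ (m - 1))⟫_ℂ
        = L ((2⁻¹ : ℝ) • (Ψ (m - 1) + Ψ m)) φ) :
    ∀ m : ℕ, m ≤ M → ‖Ψ m‖ = ‖Ψ 0‖ := by
  intro m hm
  induction m with
  | zero => rfl
  | succ n ih =>
    have hstep := hscheme (n + 1) n.succ_pos hm
    exact (norm_eq_of_crank_nicolson_step hL_herm hhbar.ne' hτ.ne' hstep).trans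
      (ih (Nat.le_of_succ_le hm))

/-- Mass conservation of the Crank–Nicolson scheme in abstract Hilbert-space
form: if `ihbar⟨(Ψ^m − Ψ^{m−1})/τ, φ⟩ = L((Ψ^{m−1}+Ψ^m)/2, φ)` for all test
elements `φ`, with `L` a Hermitian-symmetric sesquilinear form, then
`‖Ψ^m‖ = ‖Ψ⁰‖` for all `0 ≤ m ≤ M`. The pairing `⟨w, φ⟩` (linear in `w`,
conjugate-linear in `φ`) is realized as Mathlib's inner product `⟪φ, w⟫_ℂ`. -/
theorem crank_nicolson_mass_conservation
    {V : Type*} [NormedAddCommGroup V] [InnerProductSpace ℂ V]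
    (L : V → V → ℂ)
    (hL_lin : ∀ (a : ℂ) (w w' φ : V), L (a • w + w') φ = a * L w φ + L w' φ)
    (hL_conjlin : ∀ (a : ℂ) (w φ φ' : V), L w (a • φ + φ') = conj a * L w φ + L w φ')
    (hL_herm : ∀ w φ : V, L w φ = conj (L φ w))
    (hbar τ : ℝ) (hhbar : 0 < hbar) (hτ : 0 < τ)
    (M : ℕ) (hM : 1 ≤ M) (Ψ : ℕ → V)
    (hscheme : ∀ m : ℕ, 1 ≤ m → m ≤ M → ∀ φ : V,
      Complex.I * (hbar : ℂ) * ⟪φ, (τ⁻¹ : ℝ) • (Ψ m - Ψ (m - 1))⟫_ℂ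
        = L ((2⁻¹ : ℝ) • (Ψ (m - 1) + Ψ m)) φ) :
    ∀ m : ℕ, m ≤ M → ‖Ψ m‖ = ‖Ψ 0‖ :=
  crank_nicolson_mass_conservation_general L hL_herm hbar τ hhbar hτ M Ψ hscheme
end

section
/- Let V be a finite-dimensional complex inner product space, let A : V → V and R : V → V be self-adjoint linear operators with R positive definite, let v̂ ∈ ℝ be such that ⟨(A + v̂R)w, w⟩ > 0 for every nonzero w ∈ V, and define the energy norm ‖w‖_E = √⟨(A + v̂R)w, w⟩ and the dual norm ‖F‖_* = max{ |⟨F, φ⟩| : φ ∈ V, ‖φ‖_E = 1 }. Let ħ > 0, τ > 0, M ≥ 1, and suppose Ψ⁰, …, Ψ^M ∈ V and F⁰, F¹, …, F^M ∈ V satisfy, for every 1 ≤ m ≤ M and every φ ∈ V, iħ·⟨R(Ψ^m − Ψ^{m−1})/τ, φ⟩ = ⟨A(Ψ^{m−1} + Ψ^m)/2, φ⟩ + ⟨F^m, φ⟩. Then max_{0 ≤ m ≤ M} ‖Ψ^m‖_E ≤ ‖Ψ⁰‖_E + 4·Σ_{m=1}^M ( (|v̂|/ħ)·‖F^m‖_*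 + ‖(F^m − F^{m−1})/τ‖_* )·τ + 4‖F⁰‖_*. -/
/-!
Testing the scheme with `φ = Ψ^m - Ψ^{m-1}` and with `φ = Ψ^{m-1} + Ψ^m` shows that the
increments of `⟨AΨ, Ψ⟩` and of `⟨RΨ, Ψ⟩` over one step are `-2 Re ⟨Ψ^m - Ψ^{m-1}, F^m⟩` and
`(τ/ħ) Im ⟨Ψ^{m-1} + Ψ^m, F^m⟩`. Summing by parts moves the time difference from `Ψ` onto `F`,
so that every pairing left in `‖Ψ^k‖_E²` is bounded by a dual norm of the data times
`Q = max_m ‖Ψ^m‖_E`. Hence `‖Ψ^k‖_E² ≤ Q · C` with `C` the right-hand side of the bound, and at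
the time level where the maximum is attained this reads `Q² ≤ Q · C`.
-/

open Finset
open scoped InnerProductSpace

theorem Finset.sum_Icc_one_sub_pred {G : Type*} [AddCommGroup G] (f : ℕ → G) (k : ℕ) :
    ∑ m ∈ Icc 1 k, (f m - f (m - 1)) = f k - f 0 := by
  induction k with
  | zero => simp
  | succ k ih =>
    rw [sum_Icc_succ_top (by omega), ih, Nat.add_sub_cancel]
    abel

section EnergyNorm

variable {V : Type*} [NormedAddCommGroup V] [InnerProductSpace ℂ V]

theorem re_inner_apply_smul_self (B : V →ₗ[ℂ] V) (r : ℝ) (w : V) :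
    (⟪B (r • w), r • w⟫_ℂ).re = r ^ 2 * (⟪B w, w⟫_ℂ).re := by
  simp only [B.map_smul_of_tower, RCLike.real_smul_eq_coe_smul (K := ℂ), inner_smul_real_left,
    inner_smul_real_right, smul_eq_mul]
  simp [← mul_assoc, sq]

theorem exists_sq_norm_le_mul_re_inner_apply_self [FiniteDimensional ℂ V] (B : V →ₗ[ℂ] V)
    (hB : ∀ w, w ≠ 0 → 0 < (⟪B w, w⟫_ℂ).re) :
    ∃ C : ℝ, ∀ w : V, ‖w‖ ^ 2 ≤ C * (⟪B w, w⟫_ℂ).re := by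
  rcases subsingleton_or_nontrivial V with hV | hV
  · exact ⟨0, fun w => by simp [Subsingleton.elim w 0]⟩
  have hcont : Continuous fun w : V => (⟪B w, w⟫_ℂ).re :=
    Complex.continuous_re.comp (B.continuous_of_finiteDimensional.inner continuous_id)
  obtain ⟨u, hu, hmin⟩ := (isCompact_sphere (0 : V) 1).exists_isMinOn
    (NormedSpace.sphere_nonempty.mpr zero_le_one) hcont.continuousOn
  have hu0 : u ≠ 0 := ne_zero_of_mem_unit_sphere ⟨u, hu⟩
  refine ⟨(⟪B u, u⟫_ℂ).re⁻¹, fun w => ?_⟩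
  rcases eq_or_ne w 0 with rfl | hw
  · simp
  have hw' : 0 < ‖w‖ := norm_pos_iff.mpr hw
  have hle := isMinOn_iff.mp hmin (‖w‖⁻¹ • w) (by simp [norm_smul, hw'.ne'])
  rw [re_inner_apply_smul_self] at hle
  rw [← div_eq_inv_mul, le_div_iff₀ (hB u hu0)]
  calc ‖w‖ ^ 2 * (⟪B u, u⟫_ℂ).re ≤ ‖w‖ ^ 2 * (‖w‖⁻¹ ^ 2 * (⟪B w, w⟫_ℂ).re) := by gcongr
    _ = (⟪B w, w⟫_ℂ).re := by field_simp

noncomputable def energyNorm (B : V →ₗ[ℂ] V) (w : V) : ℝ :=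
  √(⟪B w, w⟫_ℂ).re

noncomputable def dualEnergyNorm (B : V →ₗ[ℂ] V) (F : V) : ℝ :=
  sSup ((fun φ : V => ‖⟪φ, F⟫_ℂ‖) '' {φ : V | energyNorm B φ = 1})

variable (B : V →ₗ[ℂ] V)

theorem energyNorm_nonneg (w : V) : 0 ≤ energyNorm B w :=
  Real.sqrt_nonneg _

theorem energyNorm_smul {r : ℝ} (hr : 0 ≤ r) (w : V) :
    energyNorm B (r • w) = r * energyNorm B w := by
  rw [energyNorm, energyNorm, re_inner_apply_smul_self, Real.sqrt_mul (sq_nonneg r),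
    Real.sqrt_sq hr]

theorem dualEnergyNorm_nonneg (F : V) : 0 ≤ dualEnergyNorm B F :=
  Real.sSup_nonneg <| by
    rintro _ ⟨φ, -, rfl⟩
    exact norm_nonneg _

variable {B} (hB : ∀ w, w ≠ 0 → 0 < (⟪B w, w⟫_ℂ).re)
include hB

theorem energyNorm_sq (w : V) : energyNorm B w ^ 2 = (⟪B w, w⟫_ℂ).re := by
  refine Real.sq_sqrt ?_
  rcases eq_or_ne w 0 with rfl | hw
  · simp
  · exact (hB w hw).le

theorem energyNorm_pos {w : V} (hw : w ≠ 0) : 0 < energyNorm B w :=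
  Real.sqrt_pos.mpr (hB w hw)

theorem norm_inner_le_dualEnergyNorm_mul [FiniteDimensional ℂ V] (φ F : V) :
    ‖⟪φ, F⟫_ℂ‖ ≤ dualEnergyNorm B F * energyNorm B φ := by
  rcases eq_or_ne φ 0 with rfl | hφ
  · simp [energyNorm]
  have hpos := energyNorm_pos hB hφ
  have hbdd : BddAbove ((fun φ : V => ‖⟪φ, F⟫_ℂ‖) '' {φ : V | energyNorm B φ = 1}) := by
    obtain ⟨C, hC⟩ := exists_sq_norm_le_mul_re_inner_apply_self B hB
    refine ⟨√C * ‖F‖, ?_⟩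
    rintro _ ⟨ψ, hψ, rfl⟩
    have hψ' : (⟪B ψ, ψ⟫_ℂ).re = 1 := Real.sqrt_eq_one.mp hψ
    have hnorm : ‖ψ‖ ≤ √C :=
      (le_abs_self _).trans (Real.abs_le_sqrt (by simpa [hψ'] using hC ψ))
    exact (norm_inner_le_norm ψ F).trans (by gcongr)
  have hunit : energyNorm B ((energyNorm B φ)⁻¹ • φ) = 1 := by
    rw [energyNorm_smul B (inv_nonneg.mpr hpos.le), inv_mul_cancel₀ hpos.ne']
  have hle : ‖⟪(energyNorm B φ)⁻¹ • φ, F⟫_ℂ‖ ≤ dualEnergyNorm B F :=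
    le_csSup hbdd ⟨_, hunit, rfl⟩
  rw [RCLike.real_smul_eq_coe_smul (K := ℂ), inner_smul_real_left, norm_smul,
    Real.norm_of_nonneg (inv_nonneg.mpr hpos.le), inv_mul_le_iff₀ hpos, mul_comm] at hle
  exact hle

end EnergyNorm

section CrankNicolson

variable {V : Type*} [NormedAddCommGroup V] [InnerProductSpace ℂ V]

theorem LinearMap.IsSymmetric.re_inner_sub_apply_add {T : V →ₗ[ℂ] V} (hT : T.IsSymmetric)
    (a b : V) : (⟪b - a, T (a + b)⟫_ℂ).re = (⟪T b, b⟫_ℂ).re - (⟪T a, a⟫_ℂ).re := by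
  have hcross : (⟪T b, a⟫_ℂ).re = (⟪T a, b⟫_ℂ).re := by
    rw [← hT.conj_inner_sym, Complex.conj_re]
  rw [map_add, inner_add_right, inner_sub_left, inner_sub_left, ← hT b, ← hT a, ← hT b, ← hT a]
  simp only [Complex.add_re, Complex.sub_re]
  linarith

theorem LinearMap.IsSymmetric.re_inner_add_apply_sub {T : V →ₗ[ℂ] V} (hT : T.IsSymmetric)
    (a b : V) : (⟪a + b, T (b - a)⟫_ℂ).re = (⟪T b, b⟫_ℂ).re - (⟪T a, a⟫_ℂ).re := by
  rw [← hT, ← inner_conj_symm, Complex.conj_re, hT.re_inner_sub_apply_add]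

/-- One step `Ψ^{m-1} = a ↦ Ψ^m = b` of the Crank–Nicolson scheme with source `F = F^m`. -/
def IsCrankNicolsonStep (A R : V →ₗ[ℂ] V) (ħ τ : ℝ) (a b F : V) : Prop :=
  ∀ φ : V, Complex.I * (ħ : ℂ) * ⟪φ, (τ⁻¹ : ℝ) • R (b - a)⟫_ℂ
    = ⟪φ, (2⁻¹ : ℝ) • A (a + b)⟫_ℂ + ⟪φ, F⟫_ℂ

variable {A R : V →ₗ[ℂ] V} {ħ τ : ℝ} {a b F : V}

theorem IsCrankNicolsonStep.energy_sub (h : IsCrankNicolsonStep A R ħ τ a b F)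
    (hA : A.IsSymmetric) (hR : R.IsSymmetric) :
    (⟪A b, b⟫_ℂ).re - (⟪A a, a⟫_ℂ).re = -2 * (⟪b - a, F⟫_ℂ).re := by
  have hreal : (⟪b - a, R (b - a)⟫_ℂ).im = 0 := hR.im_inner_self_apply _
  have := congrArg Complex.re (h (b - a))
  simp only [inner_smul_right_eq_smul, Complex.real_smul, mul_assoc, Complex.I_mul_re,
    Complex.im_ofReal_mul, Complex.add_re, Complex.re_ofReal_mul, hreal,
    hA.re_inner_sub_apply_add] at this
  linarith

theorem IsCrankNicolsonStep.mass_sub (h : IsCrankNicolsonStep A R ħ τ a b F)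
    (hA : A.IsSymmetric) (hR : R.IsSymmetric) (hħ : ħ ≠ 0) (hτ : τ ≠ 0) :
    (⟪R b, b⟫_ℂ).re - (⟪R a, a⟫_ℂ).re = τ / ħ * (⟪a + b, F⟫_ℂ).im := by
  have hreal : (⟪a + b, A (a + b)⟫_ℂ).im = 0 := hA.im_inner_self_apply _
  have := congrArg Complex.im (h (a + b))
  simp only [inner_smul_right_eq_smul, Complex.real_smul, mul_assoc, Complex.I_mul_im,
    Complex.re_ofReal_mul, Complex.add_im, Complex.im_ofReal_mul, hreal,
    hR.re_inner_add_apply_sub] at this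
  field_simp at this ⊢
  linarith

theorem IsCrankNicolsonStep.shiftedEnergy_sub (h : IsCrankNicolsonStep A R ħ τ a b F)
    (hA : A.IsSymmetric) (hR : R.IsSymmetric) (v : ℝ) (hħ : ħ ≠ 0) (hτ : τ ≠ 0) :
    (⟪(A + (v : ℂ) • R) b, b⟫_ℂ).re - (⟪(A + (v : ℂ) • R) a, a⟫_ℂ).re
      = -2 * (⟪b - a, F⟫_ℂ).re + v * τ / ħ * (⟪a + b, F⟫_ℂ).im := by
  simp only [LinearMap.add_apply, LinearMap.smul_apply, inner_add_left (A _), inner_smul_left,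
    Complex.conj_ofReal, Complex.add_re, Complex.re_ofReal_mul]
  linear_combination h.energy_sub hA hR + v * h.mass_sub hA hR hħ hτ

/-- Summation by parts of the per-step energy identities. -/
theorem crankNicolson_energy_identity (hA : A.IsSymmetric) (hR : R.IsSymmetric) (v : ℝ)
    (hħ : ħ ≠ 0) (hτ : τ ≠ 0) {M : ℕ} {Ψ F : ℕ → V}
    (hscheme : ∀ m, 1 ≤ m → m ≤ M → IsCrankNicolsonStep A R ħ τ (Ψ (m - 1)) (Ψ m) (F m))
    {k : ℕ} (hk : k ≤ M) :
    (⟪(A + (v : ℂ) • R) (Ψ k), Ψ k⟫_ℂ).re + 2 * (⟪Ψ k, F k⟫_ℂ).re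
      = (⟪(A + (v : ℂ) • R) (Ψ 0), Ψ 0⟫_ℂ).re + 2 * (⟪Ψ 0, F 0⟫_ℂ).re
        + ∑ m ∈ Icc 1 k, (2 * (⟪Ψ (m - 1), F m - F (m - 1)⟫_ℂ).re
          + v * τ / ħ * (⟪Ψ (m - 1) + Ψ m, F m⟫_ℂ).im) := by
  set e : ℕ → ℝ := fun j => (⟪(A + (v : ℂ) • R) (Ψ j), Ψ j⟫_ℂ).re + 2 * (⟪Ψ j, F j⟫_ℂ).re
  have hstep : ∀ m ∈ Icc 1 k, e m - e (m - 1) = 2 * (⟪Ψ (m - 1), F m - F (m - 1)⟫_ℂ).re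
      + v * τ / ħ * (⟪Ψ (m - 1) + Ψ m, F m⟫_ℂ).im := by
    intro m hm
    obtain ⟨hm1, hmk⟩ := mem_Icc.mp hm
    have := (hscheme m hm1 (hmk.trans hk)).shiftedEnergy_sub hA hR v hħ hτ
    simp only [e, inner_sub_left, inner_sub_right, Complex.sub_re] at this ⊢
    linarith
  have htelescope := Finset.sum_Icc_one_sub_pred e k
  rw [sum_congr rfl hstep] at htelescope
  simp only [e] at htelescope
  linarith

end CrankNicolson

section Bounds

variable {V : Type*} [NormedAddCommGroup V] [InnerProductSpace ℂ V] [FiniteDimensional ℂ V]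
  {B : V →ₗ[ℂ] V} (hB : ∀ w, w ≠ 0 → 0 < (⟪B w, w⟫_ℂ).re) {Q τ : ℝ}
include hB

theorem norm_inner_le_dualEnergyNorm_mul_of_le {φ : V} (hφ : energyNorm B φ ≤ Q) (G : V) :
    ‖⟪φ, G⟫_ℂ‖ ≤ dualEnergyNorm B G * Q :=
  (norm_inner_le_dualEnergyNorm_mul hB φ G).trans
    (mul_le_mul_of_nonneg_left hφ (dualEnergyNorm_nonneg B G))

theorem norm_inner_le_mul_dualEnergyNorm_inv_smul_mul_of_le (hτ : 0 < τ) {φ : V}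
    (hφ : energyNorm B φ ≤ Q) (G : V) :
    ‖⟪φ, G⟫_ℂ‖ ≤ τ * dualEnergyNorm B (τ⁻¹ • G) * Q := by
  conv_lhs => rw [← smul_inv_smul₀ hτ.ne' G]
  rw [inner_smul_right_eq_smul, norm_smul, Real.norm_of_nonneg hτ.le, mul_assoc]
  exact mul_le_mul_of_nonneg_left (norm_inner_le_dualEnergyNorm_mul_of_le hB hφ _) hτ.le

theorem norm_inner_le_mul_dualEnergyNorm_zero_add_sum (hτ : 0 < τ) {M k : ℕ} (hk : k ≤ M)
    (F : ℕ → V) {φ : V} (hφ : energyNorm B φ ≤ Q) :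
    ‖⟪φ, F k⟫_ℂ‖ ≤ Q * (dualEnergyNorm B (F 0)
      + ∑ l ∈ Icc 1 M, dualEnergyNorm B (τ⁻¹ • (F l - F (l - 1))) * τ) := by
  have hFk : F k = F 0 + ∑ l ∈ Icc 1 k, (F l - F (l - 1)) := by
    rw [Finset.sum_Icc_one_sub_pred, add_sub_cancel]
  have hQ0 : 0 ≤ Q := (energyNorm_nonneg B φ).trans hφ
  calc ‖⟪φ, F k⟫_ℂ‖
      ≤ ‖⟪φ, F 0⟫_ℂ‖ + ∑ l ∈ Icc 1 k, ‖⟪φ, F l - F (l - 1)⟫_ℂ‖ := by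
        rw [hFk, inner_add_right, inner_sum]
        exact (norm_add_le _ _).trans (add_le_add le_rfl (norm_sum_le _ _))
    _ ≤ dualEnergyNorm B (F 0) * Q
        + ∑ l ∈ Icc 1 k, τ * dualEnergyNorm B (τ⁻¹ • (F l - F (l - 1))) * Q := by
        gcongr with l
        · exact norm_inner_le_dualEnergyNorm_mul_of_le hB hφ _
        · exact norm_inner_le_mul_dualEnergyNorm_inv_smul_mul_of_le hB hτ hφ _
    _ ≤ dualEnergyNorm B (F 0) * Q
        + ∑ l ∈ Icc 1 M, τ * dualEnergyNorm B (τ⁻¹ • (F l - F (l - 1))) * Q := by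
        gcongr
        exact fun l _ _ => by
          have := dualEnergyNorm_nonneg B (τ⁻¹ • (F l - F (l - 1)))
          positivity
    _ = _ := by
        rw [mul_add, mul_sum]
        ring_nf

theorem crankNicolson_increment_le {v ħ : ℝ} (hħ : 0 < ħ) (hτ : 0 < τ) {M m : ℕ}
    (hm : m ∈ Icc 1 M) {Ψ F : ℕ → V} (hQ : ∀ j ≤ M, energyNorm B (Ψ j) ≤ Q) :
    2 * (⟪Ψ (m - 1), F m - F (m - 1)⟫_ℂ).re + v * τ / ħ * (⟪Ψ (m - 1) + Ψ m, F m⟫_ℂ).im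
      ≤ 2 * Q * ((|v| / ħ * dualEnergyNorm B (F m)
        + dualEnergyNorm B (τ⁻¹ • (F m - F (m - 1)))) * τ) := by
  obtain ⟨hm1, hmM⟩ := mem_Icc.mp hm
  have hQprev := hQ (m - 1) (by omega)
  have hdiff : (⟪Ψ (m - 1), F m - F (m - 1)⟫_ℂ).re
      ≤ τ * dualEnergyNorm B (τ⁻¹ • (F m - F (m - 1))) * Q :=
    (Complex.re_le_norm _).trans
      (norm_inner_le_mul_dualEnergyNorm_inv_smul_mul_of_le hB hτ hQprev _)
  have hsum : ‖⟪Ψ (m - 1) + Ψ m, F m⟫_ℂ‖ ≤ 2 * (dualEnergyNorm B (F m) * Q) := by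
    rw [inner_add_left, two_mul]
    exact (norm_add_le _ _).trans (add_le_add
      (norm_inner_le_dualEnergyNorm_mul_of_le hB hQprev _)
      (norm_inner_le_dualEnergyNorm_mul_of_le hB (hQ m hmM) _))
  have hsource : v * τ / ħ * (⟪Ψ (m - 1) + Ψ m, F m⟫_ℂ).im
      ≤ |v| * τ / ħ * (2 * (dualEnergyNorm B (F m) * Q)) :=
    calc v * τ / ħ * (⟪Ψ (m - 1) + Ψ m, F m⟫_ℂ).im
        ≤ |v * τ / ħ * (⟪Ψ (m - 1) + Ψ m, F m⟫_ℂ).im| := le_abs_self _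
      _ = |v| * τ / ħ * |(⟪Ψ (m - 1) + Ψ m, F m⟫_ℂ).im| := by
          rw [abs_mul, abs_div, abs_mul, abs_of_pos hτ, abs_of_pos hħ]
      _ ≤ |v| * τ / ħ * (2 * (dualEnergyNorm B (F m) * Q)) := by
          gcongr
          exact (Complex.abs_im_le_norm _).trans hsum
  calc _ ≤ 2 * (τ * dualEnergyNorm B (τ⁻¹ • (F m - F (m - 1))) * Q)
        + |v| * τ / ħ * (2 * (dualEnergyNorm B (F m) * Q)) := by linarith
    _ = _ := by ring

end Bounds

section Stability

variable {V : Type*} [NormedAddCommGroup V] [InnerProductSpace ℂ V] [FiniteDimensional ℂ V]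
  {A R : V →ₗ[ℂ] V} {v ħ τ : ℝ} {M : ℕ} {Ψ F : ℕ → V}

theorem crankNicolson_energyNorm_sq_le (hA : A.IsSymmetric) (hR : R.IsSymmetric)
    (hv : ∀ w, w ≠ 0 → 0 < (⟪(A + (v : ℂ) • R) w, w⟫_ℂ).re) (hħ : 0 < ħ) (hτ : 0 < τ)
    (hscheme : ∀ m, 1 ≤ m → m ≤ M → IsCrankNicolsonStep A R ħ τ (Ψ (m - 1)) (Ψ m) (F m))
    {Q : ℝ} (hQ : ∀ j ≤ M, energyNorm (A + (v : ℂ) • R) (Ψ j) ≤ Q) {k : ℕ} (hk : k ≤ M) :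
    energyNorm (A + (v : ℂ) • R) (Ψ k) ^ 2
      ≤ Q * (energyNorm (A + (v : ℂ) • R) (Ψ 0)
        + 4 * ∑ l ∈ Icc 1 M, (|v| / ħ * dualEnergyNorm (A + (v : ℂ) • R) (F l)
          + dualEnergyNorm (A + (v : ℂ) • R) (τ⁻¹ • (F l - F (l - 1)))) * τ
        + 4 * dualEnergyNorm (A + (v : ℂ) • R) (F 0)) := by
  set B := A + (v : ℂ) • R
  have hQ0 : 0 ≤ Q := (energyNorm_nonneg B _).trans (hQ 0 M.zero_le)
  have hsource : ∀ l, 0 ≤ |v| / ħ * dualEnergyNorm B (F l) := fun l =>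
    mul_nonneg (div_nonneg (abs_nonneg v) hħ.le) (dualEnergyNorm_nonneg B _)
  have hincrements := calc
    ∑ m ∈ Icc 1 k, (2 * (⟪Ψ (m - 1), F m - F (m - 1)⟫_ℂ).re
        + v * τ / ħ * (⟪Ψ (m - 1) + Ψ m, F m⟫_ℂ).im)
      ≤ ∑ m ∈ Icc 1 k, 2 * Q * ((|v| / ħ * dualEnergyNorm B (F m)
          + dualEnergyNorm B (τ⁻¹ • (F m - F (m - 1)))) * τ) :=
        sum_le_sum fun m hm =>
          crankNicolson_increment_le hv hħ hτ (Icc_subset_Icc_right hk hm) hQ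
    _ ≤ ∑ m ∈ Icc 1 M, 2 * Q * ((|v| / ħ * dualEnergyNorm B (F m)
          + dualEnergyNorm B (τ⁻¹ • (F m - F (m - 1)))) * τ) := by
        gcongr
        exact fun l _ _ => by
          have := hsource l
          have := dualEnergyNorm_nonneg B (τ⁻¹ • (F l - F (l - 1)))
          positivity
    _ = 2 * Q * ∑ m ∈ Icc 1 M, (|v| / ħ * dualEnergyNorm B (F m)
          + dualEnergyNorm B (τ⁻¹ • (F m - F (m - 1)))) * τ := (mul_sum ..).symm
  have hvariation : ∑ l ∈ Icc 1 M, dualEnergyNorm B (τ⁻¹ • (F l - F (l - 1))) * τ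
      ≤ ∑ l ∈ Icc 1 M, (|v| / ħ * dualEnergyNorm B (F l)
          + dualEnergyNorm B (τ⁻¹ • (F l - F (l - 1)))) * τ := by
    gcongr with l
    exact le_add_of_nonneg_left (hsource l)
  have hfinal := norm_inner_le_mul_dualEnergyNorm_zero_add_sum hv hτ hk F (hQ k hk)
  have hinitial := norm_inner_le_dualEnergyNorm_mul_of_le hv (hQ 0 M.zero_le) (F 0)
  have henergy : (⟪B (Ψ 0), Ψ 0⟫_ℂ).re ≤ Q * energyNorm B (Ψ 0) := by
    rw [← energyNorm_sq hv, sq]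
    exact mul_le_mul_of_nonneg_right (hQ 0 M.zero_le) (energyNorm_nonneg B _)
  have hidentity := crankNicolson_energy_identity hA hR v hħ.ne' hτ.ne' hscheme hk
  have hfinal' := (neg_le_abs _).trans ((Complex.abs_re_le_norm _).trans hfinal)
  have hinitial' := (Complex.re_le_norm _).trans hinitial
  have hvariation' := mul_le_mul_of_nonneg_left hvariation hQ0
  rw [energyNorm_sq hv]
  linarith

theorem crankNicolson_energyNorm_le (hA : A.IsSymmetric) (hR : R.IsSymmetric)
    (hv : ∀ w, w ≠ 0 → 0 < (⟪(A + (v : ℂ) • R) w, w⟫_ℂ).re) (hħ : 0 < ħ) (hτ : 0 < τ)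
    (hscheme : ∀ m, 1 ≤ m → m ≤ M → IsCrankNicolsonStep A R ħ τ (Ψ (m - 1)) (Ψ m) (F m))
    {m : ℕ} (hm : m ≤ M) :
    energyNorm (A + (v : ℂ) • R) (Ψ m)
      ≤ energyNorm (A + (v : ℂ) • R) (Ψ 0)
        + 4 * ∑ l ∈ Icc 1 M, (|v| / ħ * dualEnergyNorm (A + (v : ℂ) • R) (F l)
          + dualEnergyNorm (A + (v : ℂ) • R) (τ⁻¹ • (F l - F (l - 1)))) * τ
        + 4 * dualEnergyNorm (A + (v : ℂ) • R) (F 0) := by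
  set B := A + (v : ℂ) • R
  obtain ⟨k, hk, hmax⟩ :=
    exists_max_image (range (M + 1)) (fun j => energyNorm B (Ψ j)) nonempty_range_add_one
  have hQ : ∀ j ≤ M, energyNorm B (Ψ j) ≤ energyNorm B (Ψ k) :=
    fun j hj => hmax j (mem_range_succ_iff.mpr hj)
  have hsq := crankNicolson_energyNorm_sq_le hA hR hv hħ hτ hscheme hQ (mem_range_succ_iff.mp hk)
  have hsum : 0 ≤ ∑ l ∈ Icc 1 M, (|v| / ħ * dualEnergyNorm B (F l)
      + dualEnergyNorm B (τ⁻¹ • (F l - F (l - 1)))) * τ := sum_nonneg fun l _ => by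
    have := dualEnergyNorm_nonneg B (F l)
    have := dualEnergyNorm_nonneg B (τ⁻¹ • (F l - F (l - 1)))
    positivity
  have := energyNorm_nonneg B (Ψ 0)
  have := dualEnergyNorm_nonneg B (F 0)
  exact (hQ m hm).trans (by nlinarith [energyNorm_nonneg B (Ψ k)])

end Stability

theorem crank_nicolson_second_stability_bound_general
    {V : Type*} [NormedAddCommGroup V] [InnerProductSpace ℂ V]
    [FiniteDimensional ℂ V]
    (A R : V →ₗ[ℂ] V) (hA : A.IsSymmetric) (hR : R.IsSymmetric)
    (v : ℝ) (hv : ∀ w : V, w ≠ 0 → 0 < (⟪(A + (v : ℂ) • R) w, w⟫_ℂ).re)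
    (normE : V → ℝ)
    (hnormE : ∀ w : V, normE w = Real.sqrt (⟪(A + (v : ℂ) • R) w, w⟫_ℂ).re)
    (dual : V → ℝ)
    (hdual : ∀ F : V,
      dual F = sSup ((fun φ : V => ‖⟪φ, F⟫_ℂ‖) '' {φ : V | normE φ = 1}))
    (hbar τ : ℝ) (hhbar : 0 < hbar) (hτ : 0 < τ)
    (M : ℕ) (Ψ F : ℕ → V)
    (hscheme : ∀ m : ℕ, 1 ≤ m → m ≤ M → ∀ φ : V,
      Complex.I * (hbar : ℂ) * ⟪φ, (τ⁻¹ : ℝ) • R (Ψ m - Ψ (m - 1))⟫_ℂ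
        = ⟪φ, (2⁻¹ : ℝ) • A (Ψ (m - 1) + Ψ m)⟫_ℂ + ⟪φ, F m⟫_ℂ) :
    ∀ m : ℕ, m ≤ M →
      normE (Ψ m)
        ≤ normE (Ψ 0)
          + 4 * ∑ l ∈ Icc 1 M,
              ((|v| / hbar) * dual (F l) + dual ((τ⁻¹ : ℝ) • (F l - F (l - 1)))) * τ
          + 4 * dual (F 0) := by
  obtain rfl : normE = energyNorm (A + (v : ℂ) • R) := funext hnormE
  obtain rfl : dual = dualEnergyNorm (A + (v : ℂ) • R) := funext hdual
  exact fun m hm => crankNicolson_energyNorm_le hA hR hv hhbar hτ hscheme hm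

/-- Second stability bound (Proposition 2) for the Crank–Nicolson scheme in
abstract finite-dimensional Hilbert-space form: with `A`, `R` self-adjoint,
`R` positive definite, and a real shift `v̂` making the energy form
`⟨(A + v̂R)w, w⟩` positive definite, the scheme
`iħ⟨R(Ψ^m − Ψ^{m−1})/τ, φ⟩ = ⟨A(Ψ^{m−1}+Ψ^m)/2, φ⟩ + ⟨F^m, φ⟩` satisfies
`max_m ‖Ψ^m‖_E ≤ ‖Ψ⁰‖_E + 4∑_{m=1}^M ((|v̂|/ħ)‖F^m‖_* + ‖(F^m−F^{m−1})/τ‖_*)τ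
+ 4‖F⁰‖_*`. The pairing `⟨w, φ⟩` (linear in `w`, conjugate-linear in `φ`) is
realized as Mathlib's inner product `⟪φ, w⟫_ℂ`. -/
theorem crank_nicolson_second_stability_bound
    {V : Type*} [NormedAddCommGroup V] [InnerProductSpace ℂ V]
    [FiniteDimensional ℂ V]
    (A R : V →ₗ[ℂ] V) (hA : A.IsSymmetric) (hR : R.IsSymmetric)
    (hRpos : ∀ w : V, w ≠ 0 → 0 < (⟪R w, w⟫_ℂ).re)
    (v : ℝ) (hv : ∀ w : V, w ≠ 0 → 0 < (⟪(A + (v : ℂ) • R) w, w⟫_ℂ).re)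
    (normE : V → ℝ)
    (hnormE : ∀ w : V, normE w = Real.sqrt (⟪(A + (v : ℂ) • R) w, w⟫_ℂ).re)
    (dual : V → ℝ)
    (hdual : ∀ F : V,
      dual F = sSup ((fun φ : V => ‖⟪φ, F⟫_ℂ‖) '' {φ : V | normE φ = 1}))
    (hbar τ : ℝ) (hhbar : 0 < hbar) (hτ : 0 < τ)
    (M : ℕ) (hM : 1 ≤ M) (Ψ F : ℕ → V)
    (hscheme : ∀ m : ℕ, 1 ≤ m → m ≤ M → ∀ φ : V,
      Complex.I * (hbar : ℂ) * ⟪φ, (τ⁻¹ : ℝ) • R (Ψ m - Ψ (m - 1))⟫_ℂ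
        = ⟪φ, (2⁻¹ : ℝ) • A (Ψ (m - 1) + Ψ m)⟫_ℂ + ⟪φ, F m⟫_ℂ) :
    ∀ m : ℕ, m ≤ M →
      normE (Ψ m)
        ≤ normE (Ψ 0)
          + 4 * ∑ l ∈ Icc 1 M,
              ((|v| / hbar) * dual (F l) + dual ((τ⁻¹ : ℝ) • (F l - F (l - 1)))) * τ
          + 4 * dual (F 0) :=
  crank_nicolson_second_stability_bound_general A R hA hR v hv normE hnormE dual hdual hbar τ hhbar
    hτ M Ψ F hscheme
end
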